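/- arXiv:2604.02513 — 2 statements merged into one kernel-verified Lean document; each statement's English description precedes it below -/
import Mathlib

section
/- (Monotone descent of the SBL objective under the p-SBL update; Theorem 1, descent part.) Let γ ∈ ℝ^M have strictly positive entries and suppose T₁(γ)[i] > 0 and T₂(γ)[i] > 0 for every i. For any 0 < p ≤ 1, the p-SBL update γ′ defined by γ′[i] = (T₁(γ)[i]/T₂(γ)[i])^{p}·γ[i] has strictly positive entries and satisfies f(γ′) ≤ f(γ). -/
open Matrix Finset Real

noncomputable def Sig {N M : ℕ} (Φ : Matrix (Fin N) (Fin M) ℝ) (σ2 : ℝ)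
    (γ : Fin M → ℝ) : Matrix (Fin N) (Fin N) ℝ :=
  Φ * Matrix.diagonal γ * Φᵀ + σ2 • (1 : Matrix (Fin N) (Fin N) ℝ)

noncomputable def T1 {N M L : ℕ} (Φ : Matrix (Fin N) (Fin M) ℝ) (σ2 : ℝ)
    (y : Fin L → Fin N → ℝ) (γ : Fin M → ℝ) (i : Fin M) : ℝ :=
  (1 / (L : ℝ)) * ∑ l, ((fun n => Φ n i) ⬝ᵥ (Sig Φ σ2 γ)⁻¹ *ᵥ y l) ^ 2

noncomputable def T2 {N M : ℕ} (Φ : Matrix (Fin N) (Fin M) ℝ) (σ2 : ℝ)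
    (γ : Fin M → ℝ) (i : Fin M) : ℝ :=
  (fun n => Φ n i) ⬝ᵥ (Sig Φ σ2 γ)⁻¹ *ᵥ (fun n => Φ n i)

noncomputable def fSBL {N M L : ℕ} (Φ : Matrix (Fin N) (Fin M) ℝ) (σ2 : ℝ)
    (y : Fin L → Fin N → ℝ) (γ : Fin M → ℝ) : ℝ :=
  Real.log (Sig Φ σ2 γ).det + (1 / (L : ℝ)) * ∑ l, y l ⬝ᵥ (Sig Φ σ2 γ)⁻¹ *ᵥ y l

section AuxGen
variable {n m : Type*} [Fintype n] [Fintype m] [DecidableEq n] [DecidableEq m]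

lemma trace_eq_sum_eigs {A : Matrix n n ℝ} (hA : A.IsHermitian) :
    A.trace = ∑ i, hA.eigenvalues i := by
  rw [hA.trace_eq_sum_eigenvalues]
  simp

lemma posdef_conj {P B : Matrix n n ℝ} (hP : P.PosDef) (hB : B.PosDef) :
    (P * B * P).PosDef := by
  rw [Matrix.posDef_iff_dotProduct_mulVec]
  constructor
  · have := Matrix.isHermitian_mul_mul_conjTranspose P hB.isHermitian
    rwa [hP.isHermitian.eq] at this
  · intro x hx
    have hPx : P *ᵥ x ≠ 0 := by
      intro h
      exact hx (Matrix.mulVec_injective_iff_isUnit.mpr hP.isUnit |>.eq_iff.mp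
        (by simpa using h))
    have hpos := hB.dotProduct_mulVec_pos hPx
    have hsym : star x ⬝ᵥ (P * B * P) *ᵥ x = star (P *ᵥ x) ⬝ᵥ B *ᵥ (P *ᵥ x) := by
      rw [← Matrix.mulVec_mulVec, ← Matrix.mulVec_mulVec, Matrix.dotProduct_mulVec,
        star_mulVec, hP.isHermitian.eq]
    rw [hsym]
    exact hpos

open scoped MatrixOrder in
lemma sqrt_posDef {A : Matrix n n ℝ} (hA : A.PosDef) : (CFC.sqrt A).PosDef := by
  set S := CFC.sqrt A with hSdef
  have hS : S.PosSemidef := (CFC.sqrt_nonneg A).posSemidef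
  refine .of_dotProduct_mulVec_pos hS.isHermitian fun x hx => ?_
  rcases lt_or_eq_of_le (hS.dotProduct_mulVec_nonneg x) with h | h
  · exact h
  · exfalso
    have hSx : S *ᵥ x = 0 := (hS.dotProduct_mulVec_zero_iff x).mp h.symm
    have hAx : A *ᵥ x = 0 := by
      rw [← CFC.sqrt_mul_sqrt_self A hA.posSemidef.nonneg, ← Matrix.mulVec_mulVec, hSx,
        Matrix.mulVec_zero]
    have := hA.dotProduct_mulVec_pos hx
    rw [hAx, dotProduct_zero] at this
    exact lt_irrefl 0 this

open scoped MatrixOrder in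
lemma logdet_bound {A B : Matrix n n ℝ} (hA : A.PosDef) (hB : B.PosDef) :
    Real.log B.det ≤ Real.log A.det + (A⁻¹ * B).trace - Fintype.card n := by
  set S := CFC.sqrt A with hSdef
  have hS : S.PosDef := sqrt_posDef hA
  have hSS : S * S = A := CFC.sqrt_mul_sqrt_self A hA.posSemidef.nonneg
  have hSinv : S⁻¹.PosDef := hS.inv
  set C := S⁻¹ * B * S⁻¹ with hCdef
  have hC : C.PosDef := posdef_conj hSinv hB
  -- det C = det B / det A
  have hdetA : (0:ℝ) < A.det := hA.det_pos
  have hdetS : S.det * S.det = A.det := by rw [← Matrix.det_mul, hSS]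
  have hdetSne : S.det ≠ 0 := hS.det_pos.ne'
  have hdetC : C.det = B.det / A.det := by
    rw [hCdef, Matrix.det_mul, Matrix.det_mul, Matrix.det_nonsing_inv, Ring.inverse_eq_inv,
      ← hdetS]
    field_simp
  -- trace C = trace (A⁻¹ * B)
  have htrC : C.trace = (A⁻¹ * B).trace := by
    rw [hCdef, Matrix.trace_mul_cycle, ← Matrix.mul_inv_rev, hSS]
  -- eigenvalue bound
  have heig : Real.log C.det ≤ C.trace - Fintype.card n := by
    have hd : C.det = ∏ i, hC.isHermitian.eigenvalues i := by
      rw [hC.isHermitian.det_eq_prod_eigenvalues]; norm_num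
    have ht : C.trace = ∑ i, hC.isHermitian.eigenvalues i := trace_eq_sum_eigs hC.isHermitian
    rw [hd, ht, Real.log_prod (fun i _ => (hC.eigenvalues_pos i).ne')]
    calc ∑ i, Real.log (hC.isHermitian.eigenvalues i)
        ≤ ∑ i, (hC.isHermitian.eigenvalues i - 1) :=
          Finset.sum_le_sum fun i _ => Real.log_le_sub_one_of_pos (hC.eigenvalues_pos i)
      _ = ∑ i, hC.isHermitian.eigenvalues i - Fintype.card n := by
          rw [Finset.sum_sub_distrib]; simp [Finset.card_univ]
  have hlogC : Real.log C.det = Real.log B.det - Real.log A.det := by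
    rw [hdetC, Real.log_div hB.det_pos.ne' hdetA.ne']
  rw [hlogC, htrC] at heig
  linarith


end AuxGen

section AuxSBL

variable {N M : ℕ} (Φ : Matrix (Fin N) (Fin M) ℝ)

lemma dot_Phi_mulVec (v : Fin N → ℝ) (w : Fin M → ℝ) :
    v ⬝ᵥ Φ *ᵥ w = ∑ i, w i * ((fun n => Φ n i) ⬝ᵥ v) := by
  simp only [dotProduct, mulVec, Finset.mul_sum, Finset.sum_mul]
  rw [Finset.sum_comm]
  exact Finset.sum_congr rfl fun i _ => Finset.sum_congr rfl fun j _ => by ring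

lemma PhiD_mulVec (δ : Fin M → ℝ) (v : Fin N → ℝ) :
    (Φ * Matrix.diagonal δ * Φᵀ) *ᵥ v
      = Φ *ᵥ (fun i => δ i * ((fun n => Φ n i) ⬝ᵥ v)) := by
  rw [← Matrix.mulVec_mulVec, ← Matrix.mulVec_mulVec]
  ext i
  simp [Matrix.mulVec, Matrix.diagonal, dotProduct, Finset.mul_sum]

lemma quadSig (σ2 : ℝ) (δ : Fin M → ℝ) (v : Fin N → ℝ) :
    v ⬝ᵥ (Sig Φ σ2 δ) *ᵥ v
      = σ2 * (v ⬝ᵥ v) + ∑ i, δ i * ((fun n => Φ n i) ⬝ᵥ v) ^ 2 := by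
  rw [Sig, Matrix.add_mulVec, dotProduct_add, PhiD_mulVec, dot_Phi_mulVec]
  have h1 : (σ2 • (1 : Matrix (Fin N) (Fin N) ℝ)) *ᵥ v = σ2 • v := by
    rw [Matrix.smul_mulVec, Matrix.one_mulVec]
  rw [h1, dotProduct_smul]
  rw [add_comm]
  congr 1
  exact Finset.sum_congr rfl fun i _ => by ring

lemma sig_posDef (σ2 : ℝ) (hσ : 0 < σ2) (δ : Fin M → ℝ) (hδ : ∀ i, 0 ≤ δ i) :
    (Sig Φ σ2 δ).PosDef := by
  rw [Matrix.posDef_iff_dotProduct_mulVec]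
  constructor
  · show (Sig Φ σ2 δ)ᴴ = _
    rw [Matrix.conjTranspose_eq_transpose_of_trivial]
    rw [Sig, Matrix.transpose_add, Matrix.transpose_smul, Matrix.transpose_one,
      Matrix.transpose_mul, Matrix.transpose_mul, Matrix.transpose_transpose,
      Matrix.diagonal_transpose, Matrix.mul_assoc]
  · intro x hx
    have : star x = x := by simp
    rw [this, quadSig]
    have hxx : 0 < x ⬝ᵥ x := by
      rcases Function.ne_iff.mp hx with ⟨n, hn⟩
      calc (0:ℝ) < x n * x n := mul_self_pos.mpr hn
        _ ≤ ∑ k, x k * x k := Finset.single_le_sum (f := fun k => x k * x k)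
            (fun k _ => mul_self_nonneg _) (Finset.mem_univ n)
        _ = x ⬝ᵥ x := by simp [dotProduct]
    have h2 : 0 ≤ ∑ i, δ i * ((fun n => Φ n i) ⬝ᵥ x) ^ 2 :=
      Finset.sum_nonneg fun i _ => mul_nonneg (hδ i) (sq_nonneg _)
    have := mul_pos hσ hxx
    linarith

lemma trace_Q_PhiD (Q : Matrix (Fin N) (Fin N) ℝ) (d : Fin M → ℝ) :
    (Q * (Φ * Matrix.diagonal d * Φᵀ)).trace
      = ∑ i, d i * ((fun n => Φ n i) ⬝ᵥ Q *ᵥ (fun n => Φ n i)) := by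
  rw [← Matrix.mul_assoc, ← Matrix.mul_assoc, Matrix.trace_mul_cycle]
  have h2 : ∀ (Mx : Matrix (Fin M) (Fin M) ℝ),
      (Mx * Matrix.diagonal d).trace = ∑ i, Mx i i * d i := by
    intro Mx
    simp [Matrix.trace, Matrix.diag, Matrix.mul_apply, Matrix.diagonal_apply,
      Finset.sum_ite_eq', mul_ite]
  rw [h2]
  refine Finset.sum_congr rfl fun i _ => ?_
  rw [mul_comm]
  congr 1

lemma data_upper (σ2 : ℝ) (hσ : 0 < σ2) (δ : Fin M → ℝ) (hδ : ∀ i, 0 < δ i)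
    (yv : Fin N → ℝ) (x : Fin M → ℝ) :
    yv ⬝ᵥ (Sig Φ σ2 δ)⁻¹ *ᵥ yv ≤
      (1/σ2) * ((yv - Φ *ᵥ x) ⬝ᵥ (yv - Φ *ᵥ x)) + ∑ i, (x i)^2 / δ i := by
  set B := Sig Φ σ2 δ with hBdef
  have hB : B.PosDef := sig_posDef Φ σ2 hσ δ (fun i => (hδ i).le)
  set w := B⁻¹ *ᵥ yv with hwdef
  have hBw : B *ᵥ w = yv := by
    rw [hwdef, Matrix.mulVec_mulVec, Matrix.mul_nonsing_inv _ hB.det_pos.ne'.isUnit,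
      Matrix.one_mulVec]
  have hww : w ⬝ᵥ B *ᵥ w = yv ⬝ᵥ w := by rw [hBw, dotProduct_comm]
  have hquad := quadSig Φ σ2 δ w
  set a : Fin M → ℝ := fun i => (fun n => Φ n i) ⬝ᵥ w with hadef
  set u : Fin N → ℝ := yv - Φ *ᵥ x with hudef
  -- y⬝w = u⬝w + Σ x i * a i
  have hsplit : yv ⬝ᵥ w = u ⬝ᵥ w + ∑ i, x i * a i := by
    have hPhi : w ⬝ᵥ Φ *ᵥ x = ∑ i, x i * a i := dot_Phi_mulVec Φ w x
    rw [hudef, sub_dotProduct, dotProduct_comm (Φ *ᵥ x) w, hPhi]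
    ring
  -- vector AM-GM
  have hv : 2 * (u ⬝ᵥ w) ≤ σ2 * (w ⬝ᵥ w) + (1/σ2) * (u ⬝ᵥ u) := by
    simp only [dotProduct, Finset.mul_sum]
    rw [← Finset.sum_add_distrib]
    refine Finset.sum_le_sum fun n _ => ?_
    have key : σ2 * (w n * w n) + 1/σ2 * (u n * u n) - 2 * (u n * w n)
        = (σ2 * w n - u n)^2 / σ2 := by field_simp; ring
    nlinarith [sq_nonneg (σ2 * w n - u n), div_nonneg (sq_nonneg (σ2 * w n - u n)) hσ.le]
  -- per-coordinate AM-GM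
  have hi : ∀ i, 2 * (x i * a i) ≤ δ i * (a i)^2 + (x i)^2 / δ i := by
    intro i
    have hne : δ i ≠ 0 := (hδ i).ne'
    have key : δ i * (a i)^2 + (x i)^2 / δ i - 2 * (x i * a i)
        = (δ i * a i - x i)^2 / δ i := by field_simp; ring
    nlinarith [div_nonneg (sq_nonneg (δ i * a i - x i)) (hδ i).le]
  have hsum : ∑ i, 2 * (x i * a i) ≤ ∑ i, (δ i * (a i)^2 + (x i)^2 / δ i) :=
    Finset.sum_le_sum fun i _ => hi i
  rw [Finset.sum_add_distrib] at hsum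
  have h2 : yv ⬝ᵥ w = 2 * (yv ⬝ᵥ w) - w ⬝ᵥ B *ᵥ w := by rw [hww]; ring
  have hfin : yv ⬝ᵥ w ≤ (1/σ2) * (u ⬝ᵥ u) + ∑ i, (x i)^2 / δ i := by
    rw [h2, hquad, hsplit]
    have e1 : ∑ i, 2 * (x i * a i) = 2 * ∑ i, x i * a i := by
      rw [Finset.mul_sum]
    linarith [hv, hsum, e1 ▸ hsum]
  exact hfin

lemma data_eq (σ2 : ℝ) (hσ : 0 < σ2) (γ : Fin M → ℝ) (hγ : ∀ i, 0 < γ i)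
    (yv : Fin N → ℝ) :
    (1/σ2) * ((yv - Φ *ᵥ (fun i => γ i * ((fun n => Φ n i) ⬝ᵥ (Sig Φ σ2 γ)⁻¹ *ᵥ yv)))
        ⬝ᵥ (yv - Φ *ᵥ (fun i => γ i * ((fun n => Φ n i) ⬝ᵥ (Sig Φ σ2 γ)⁻¹ *ᵥ yv))))
      + ∑ i, (γ i * ((fun n => Φ n i) ⬝ᵥ (Sig Φ σ2 γ)⁻¹ *ᵥ yv))^2 / γ i
      = yv ⬝ᵥ (Sig Φ σ2 γ)⁻¹ *ᵥ yv := by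
  set A := Sig Φ σ2 γ with hAdef
  have hA : A.PosDef := sig_posDef Φ σ2 hσ γ (fun i => (hγ i).le)
  set z := A⁻¹ *ᵥ yv with hzdef
  have hAz : A *ᵥ z = yv := by
    rw [hzdef, Matrix.mulVec_mulVec, Matrix.mul_nonsing_inv _ hA.det_pos.ne'.isUnit,
      Matrix.one_mulVec]
  have hPhix : Φ *ᵥ (fun i => γ i * ((fun n => Φ n i) ⬝ᵥ z))
      = (Φ * Matrix.diagonal γ * Φᵀ) *ᵥ z := (PhiD_mulVec Φ γ z).symm
  have hres : yv - Φ *ᵥ (fun i => γ i * ((fun n => Φ n i) ⬝ᵥ z)) = σ2 • z := by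
    rw [hPhix]
    have : A *ᵥ z = (Φ * Matrix.diagonal γ * Φᵀ) *ᵥ z + σ2 • z := by
      rw [hAdef, Sig, Matrix.add_mulVec, Matrix.smul_mulVec, Matrix.one_mulVec]
    rw [← hAz, this]
    abel
  rw [hres]
  have hterm1 : (1/σ2) * ((σ2 • z) ⬝ᵥ (σ2 • z)) = σ2 * (z ⬝ᵥ z) := by
    rw [smul_dotProduct, dotProduct_smul, smul_eq_mul, smul_eq_mul]
    field_simp
  have hterm2 : ∑ i, (γ i * ((fun n => Φ n i) ⬝ᵥ z))^2 / γ i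
      = ∑ i, γ i * ((fun n => Φ n i) ⬝ᵥ z)^2 := by
    refine Finset.sum_congr rfl fun i _ => ?_
    rw [div_eq_iff (hγ i).ne']
    ring
  rw [hterm1, hterm2]
  have hquad := quadSig Φ σ2 γ z
  have hzy : z ⬝ᵥ A *ᵥ z = yv ⬝ᵥ z := by rw [hAz, dotProduct_comm]
  have : yv ⬝ᵥ z = σ2 * (z ⬝ᵥ z) + ∑ i, γ i * ((fun n => Φ n i) ⬝ᵥ z)^2 := by
    rw [← hzy, hquad]
  linarith [this]

lemma scalar_prod (r p : ℝ) (hr : 0 < r) (hp0 : 0 < p) (hp1 : p ≤ 1) :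
    0 ≤ (r ^ p - 1) * (r ^ (1 - p) - 1) := by
  rcases le_total 1 r with h | h
  · have h1 : 1 ≤ r ^ p := Real.one_le_rpow h hp0.le
    have h2 : 1 ≤ r ^ (1 - p) := Real.one_le_rpow h (by linarith)
    nlinarith
  · have h1 : r ^ p ≤ 1 := Real.rpow_le_one hr.le h hp0.le
    have h2 : r ^ (1 - p) ≤ 1 := Real.rpow_le_one hr.le h (by linarith)
    nlinarith


end AuxSBL

/-- monotone descent of the SBL objective under the p-SBL update:
γ′ defined by γ′[i] = (T₁(γ)[i]/T₂(γ)[i])^p·γ[i] is entrywise positive and f(γ′) ≤ f(γ). -/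
theorem stmt5 {N M L : ℕ} (hL : 1 ≤ L) (Φ : Matrix (Fin N) (Fin M) ℝ) (σ2 : ℝ)
    (hσ : 0 < σ2) (y : Fin L → Fin N → ℝ) (γ : Fin M → ℝ) (hγ : ∀ i, 0 < γ i)
    (hT1 : ∀ i, 0 < T1 Φ σ2 y γ i) (hT2 : ∀ i, 0 < T2 Φ σ2 γ i)
    (p : ℝ) (hp0 : 0 < p) (hp1 : p ≤ 1)
    (γ' : Fin M → ℝ) (hγ' : ∀ i, γ' i = (T1 Φ σ2 y γ i / T2 Φ σ2 γ i) ^ p * γ i) :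
    (∀ i, 0 < γ' i) ∧ fSBL Φ σ2 y γ' ≤ fSBL Φ σ2 y γ := by

  have hA : (Sig Φ σ2 γ).PosDef := sig_posDef Φ σ2 hσ γ fun i => (hγ i).le
  have hγ'pos : ∀ i, 0 < γ' i := fun i => by
    rw [hγ' i]
    exact mul_pos (Real.rpow_pos_of_pos (div_pos (hT1 i) (hT2 i)) p) (hγ i)
  have hB : (Sig Φ σ2 γ').PosDef := sig_posDef Φ σ2 hσ γ' fun i => (hγ'pos i).le
  refine ⟨hγ'pos, ?_⟩
  -- Step 1: log det bound
  have hlog : Real.log (Sig Φ σ2 γ').det ≤ Real.log (Sig Φ σ2 γ).det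
      + ∑ i, (γ' i - γ i) * T2 Φ σ2 γ i := by
    have hmain := logdet_bound hA hB
    have e1 : ∀ δ : Fin M → ℝ, ((Sig Φ σ2 γ)⁻¹ * Sig Φ σ2 δ).trace
        = ∑ i, δ i * T2 Φ σ2 γ i + σ2 * ((Sig Φ σ2 γ)⁻¹).trace := by
      intro δ
      rw [show Sig Φ σ2 δ = Φ * Matrix.diagonal δ * Φᵀ
          + σ2 • (1 : Matrix (Fin N) (Fin N) ℝ) from rfl,
        Matrix.mul_add, Matrix.trace_add, trace_Q_PhiD]
      have hsm : ((Sig Φ σ2 γ)⁻¹ * (σ2 • (1 : Matrix (Fin N) (Fin N) ℝ))).trace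
          = σ2 * ((Sig Φ σ2 γ)⁻¹).trace := by
        rw [Matrix.mul_smul, Matrix.mul_one, Matrix.trace_smul, smul_eq_mul]
      rw [hsm]
      rfl
    have htrA : ((Sig Φ σ2 γ)⁻¹ * Sig Φ σ2 γ).trace = (Fintype.card (Fin N) : ℝ) := by
      rw [Matrix.nonsing_inv_mul _ hA.det_pos.ne'.isUnit, Matrix.trace_one]
    have h1 := e1 γ'
    have h2 := e1 γ
    rw [htrA] at h2
    have hsplitsum : ∑ i, (γ' i - γ i) * T2 Φ σ2 γ i
        = ∑ i, γ' i * T2 Φ σ2 γ i - ∑ i, γ i * T2 Φ σ2 γ i := by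
      rw [← Finset.sum_sub_distrib]
      exact Finset.sum_congr rfl fun i _ => by ring
    rw [hsplitsum]
    linarith
  -- Step 2: per-snapshot data bound
  have hdata : ∀ l, y l ⬝ᵥ (Sig Φ σ2 γ')⁻¹ *ᵥ y l ≤ y l ⬝ᵥ (Sig Φ σ2 γ)⁻¹ *ᵥ y l
      + ∑ i, (γ i * ((fun n => Φ n i) ⬝ᵥ (Sig Φ σ2 γ)⁻¹ *ᵥ y l))^2
          * (1/γ' i - 1/γ i) := by
    intro l
    have h1 := data_upper Φ σ2 hσ γ' hγ'pos (y l)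
      (fun i => γ i * ((fun n => Φ n i) ⬝ᵥ (Sig Φ σ2 γ)⁻¹ *ᵥ y l))
    have h2 := data_eq Φ σ2 hσ γ hγ (y l)
    have h3 : ∑ i, (γ i * ((fun n => Φ n i) ⬝ᵥ (Sig Φ σ2 γ)⁻¹ *ᵥ y l))^2 / γ' i
        = ∑ i, (γ i * ((fun n => Φ n i) ⬝ᵥ (Sig Φ σ2 γ)⁻¹ *ᵥ y l))^2 / γ i
          + ∑ i, (γ i * ((fun n => Φ n i) ⬝ᵥ (Sig Φ σ2 γ)⁻¹ *ᵥ y l))^2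
              * (1/γ' i - 1/γ i) := by
      rw [← Finset.sum_add_distrib]
      exact Finset.sum_congr rfl fun i _ => by ring
    linarith
  -- Step 3: averaged data bound
  have hLpos : (0:ℝ) < (L:ℝ) := by exact_mod_cast Nat.lt_of_lt_of_le Nat.zero_lt_one hL
  have hsum : (1/(L:ℝ)) * ∑ l, y l ⬝ᵥ (Sig Φ σ2 γ')⁻¹ *ᵥ y l
      ≤ (1/(L:ℝ)) * ∑ l, y l ⬝ᵥ (Sig Φ σ2 γ)⁻¹ *ᵥ y l
        + ∑ i, γ i^2 * T1 Φ σ2 y γ i * (1/γ' i - 1/γ i) := by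
    have hs := Finset.sum_le_sum fun l (_ : l ∈ Finset.univ) => hdata l
    have e : ∑ l, (y l ⬝ᵥ (Sig Φ σ2 γ)⁻¹ *ᵥ y l
        + ∑ i, (γ i * ((fun n => Φ n i) ⬝ᵥ (Sig Φ σ2 γ)⁻¹ *ᵥ y l))^2
            * (1/γ' i - 1/γ i))
        = ∑ l, y l ⬝ᵥ (Sig Φ σ2 γ)⁻¹ *ᵥ y l
          + ∑ i, (∑ l, (γ i * ((fun n => Φ n i) ⬝ᵥ (Sig Φ σ2 γ)⁻¹ *ᵥ y l))^2)
              * (1/γ' i - 1/γ i) := by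
      rw [Finset.sum_add_distrib]
      congr 1
      rw [Finset.sum_comm]
      exact Finset.sum_congr rfl fun i _ => (Finset.sum_mul _ _ _).symm
    rw [e] at hs
    have hmul := mul_le_mul_of_nonneg_left hs (by positivity : (0:ℝ) ≤ 1/(L:ℝ))
    have e2 : (1/(L:ℝ)) * (∑ l, y l ⬝ᵥ (Sig Φ σ2 γ)⁻¹ *ᵥ y l
        + ∑ i, (∑ l, (γ i * ((fun n => Φ n i) ⬝ᵥ (Sig Φ σ2 γ)⁻¹ *ᵥ y l))^2)
            * (1/γ' i - 1/γ i))
        = (1/(L:ℝ)) * ∑ l, y l ⬝ᵥ (Sig Φ σ2 γ)⁻¹ *ᵥ y l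
          + ∑ i, γ i^2 * T1 Φ σ2 y γ i * (1/γ' i - 1/γ i) := by
      rw [mul_add]
      congr 1
      rw [Finset.mul_sum]
      refine Finset.sum_congr rfl fun i _ => ?_
      rw [T1]
      simp only [mul_pow]
      rw [← Finset.mul_sum]
      ring
    rw [e2] at hmul
    exact hmul
  -- Step 4: per-index nonpositivity
  have hper : ∀ i, (γ' i - γ i) * T2 Φ σ2 γ i
      + γ i^2 * T1 Φ σ2 y γ i * (1/γ' i - 1/γ i) ≤ 0 := by
    intro i
    have hr : 0 < T1 Φ σ2 y γ i / T2 Φ σ2 γ i := div_pos (hT1 i) (hT2 i)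
    set r := T1 Φ σ2 y γ i / T2 Φ σ2 γ i with hrdef
    have ha : 0 < r ^ p := Real.rpow_pos_of_pos hr p
    have hb : 0 < r ^ (1-p) := Real.rpow_pos_of_pos hr (1-p)
    have hab : r ^ p * r ^ (1-p) = r := by
      rw [← Real.rpow_add hr]
      norm_num
    have hprod := scalar_prod r p hr hp0 hp1
    have hT1eq : T1 Φ σ2 y γ i = r * T2 Φ σ2 γ i :=
      (div_mul_cancel₀ _ (hT2 i).ne').symm
    have hγ'i : γ' i = r ^ p * γ i := hγ' i
    set a := r ^ p with hadef
    set b := r ^ (1-p) with hbdef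
    have hγne : γ i ≠ 0 := (hγ i).ne'
    have heq : (γ' i - γ i) * T2 Φ σ2 γ i
        + γ i^2 * T1 Φ σ2 y γ i * (1/γ' i - 1/γ i)
        = (γ i * T2 Φ σ2 γ i) * ((a - 1) * (1 - b)) := by
      rw [hγ'i, hT1eq, ← hab]
      field_simp
      ring
    rw [heq]
    nlinarith [mul_pos (hγ i) (hT2 i), hprod]
  have htot : ∑ i, ((γ' i - γ i) * T2 Φ σ2 γ i
      + γ i^2 * T1 Φ σ2 y γ i * (1/γ' i - 1/γ i)) ≤ 0 :=
    Finset.sum_nonpos fun i _ => hper i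
  rw [Finset.sum_add_distrib] at htot
  unfold fSBL
  linarith
end

section
/- (Strict descent for 0 < p < 1 at non-stationary points.) Let γ ∈ ℝ^M have strictly positive entries, suppose T₁(γ)[i] > 0 and T₂(γ)[i] > 0 for every i, and suppose T₁(γ)[i] ≠ T₂(γ)[i] for at least one index i. Then for any 0 < p < 1, the p-SBL update γ′ defined by γ′[i] = (T₁(γ)[i]/T₂(γ)[i])^{p}·γ[i] satisfies f(γ′) < f(γ). -/
open Matrix Finset Real


lemma smul_one_eq_diag {n : ℕ} (c : ℝ) :
    c • (1 : Matrix (Fin n) (Fin n) ℝ) = Matrix.diagonal (fun _ => c) := by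
  ext i j
  by_cases h : i = j <;> simp [Matrix.one_apply, Matrix.diagonal, h]

lemma sig_posDef_s6 {N M : ℕ} (Φ : Matrix (Fin N) (Fin M) ℝ) {σ2 : ℝ} (hσ : 0 < σ2)
    {γ : Fin M → ℝ} (hγ : ∀ i, 0 ≤ γ i) :
    (Φ * Matrix.diagonal γ * Φᵀ + σ2 • (1 : Matrix (Fin N) (Fin N) ℝ)).PosDef := by
  have h1 : (Φ * Matrix.diagonal γ * Φᵀ).PosSemidef := by
    have hd : (Matrix.diagonal γ).PosSemidef := Matrix.PosSemidef.diagonal hγ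
    have := hd.mul_mul_conjTranspose_same Φ
    simpa [Matrix.conjTranspose_eq_transpose_of_trivial] using this
  have h2 : (σ2 • (1 : Matrix (Fin N) (Fin N) ℝ)).PosDef := by
    rw [smul_one_eq_diag]
    exact Matrix.PosDef.diagonal (fun _ => hσ)
  exact Matrix.PosDef.posSemidef_add h1 h2

lemma logdet_le {n : ℕ} {A B : Matrix (Fin n) (Fin n) ℝ} (hA : A.PosDef) (hB : B.PosDef) :
    Real.log B.det ≤ Real.log A.det + (A⁻¹ * B).trace - n := by
  have hAi : A⁻¹.PosDef := hA.inv
  open scoped MatrixOrder in set S := CFC.sqrt A⁻¹ with hSdef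
  open scoped MatrixOrder in have hS : S.PosSemidef := Matrix.nonneg_iff_posSemidef.mp (CFC.sqrt_nonneg _)
  open scoped MatrixOrder in have hSS : S * S = A⁻¹ := CFC.sqrt_mul_sqrt_self _ hAi.posSemidef.nonneg
  set C := S * B * S with hCdef
  have hC : C.PosSemidef := by
    have := hB.posSemidef.mul_mul_conjTranspose_same S
    rwa [hS.isHermitian.eq] at this
  have detC : C.det = A⁻¹.det * B.det := by
    rw [hCdef, Matrix.det_mul, Matrix.det_mul, ← hSS, Matrix.det_mul]
    ring
  have hdetA : 0 < A.det := hA.det_pos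
  have hdetB : 0 < B.det := hB.det_pos
  have hdetAi : 0 < A⁻¹.det := hAi.det_pos
  have hdetC : 0 < C.det := by rw [detC]; positivity
  -- eigenvalues
  have hprod : C.det = ∏ j, hC.isHermitian.eigenvalues j := by
    simpa using hC.isHermitian.det_eq_prod_eigenvalues
  have hne : ∀ j, hC.isHermitian.eigenvalues j ≠ 0 := by
    intro j
    have : (∏ j, hC.isHermitian.eigenvalues j) ≠ 0 := by rw [← hprod]; exact ne_of_gt hdetC
    exact fun h => this (Finset.prod_eq_zero (Finset.mem_univ j) h)
  have hpos : ∀ j, 0 < hC.isHermitian.eigenvalues j := fun j =>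
    lt_of_le_of_ne (hC.eigenvalues_nonneg j) (Ne.symm (hne j))
  have htr : C.trace = ∑ j, hC.isHermitian.eigenvalues j := by
    simpa using hC.isHermitian.trace_eq_sum_eigenvalues
  have hlogC : Real.log C.det ≤ C.trace - n := by
    rw [hprod, Real.log_prod (fun j _ => hne j), htr]
    have : ∀ j ∈ Finset.univ, Real.log (hC.isHermitian.eigenvalues j) ≤
        hC.isHermitian.eigenvalues j - 1 := fun j _ => Real.log_le_sub_one_of_pos (hpos j)
    calc ∑ j, Real.log (hC.isHermitian.eigenvalues j)
        ≤ ∑ j, (hC.isHermitian.eigenvalues j - 1) := Finset.sum_le_sum this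
      _ = (∑ j, hC.isHermitian.eigenvalues j) - n := by
          rw [Finset.sum_sub_distrib]; simp
  have htrC : C.trace = (A⁻¹ * B).trace := by
    rw [hCdef, Matrix.trace_mul_comm (S * B) S, ← Matrix.mul_assoc, hSS]
  have hlogdet : Real.log C.det = Real.log B.det - Real.log A.det := by
    rw [detC, Real.log_mul (ne_of_gt hdetAi) (ne_of_gt hdetB),
      Matrix.det_nonsing_inv, Ring.inverse_eq_inv', Real.log_inv]
    ring
  linarith [hlogC, hlogdet, htrC]

lemma trace_mul_phiDphiT {N M : ℕ} (W : Matrix (Fin N) (Fin N) ℝ)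
    (Φ : Matrix (Fin N) (Fin M) ℝ) (δ : Fin M → ℝ) :
    (W * (Φ * Matrix.diagonal δ * Φᵀ)).trace
      = ∑ i, δ i * ((fun n => Φ n i) ⬝ᵥ W *ᵥ (fun n => Φ n i)) := by
  have h1 : W * (Φ * Matrix.diagonal δ * Φᵀ) = ((W * Φ) * Matrix.diagonal δ) * Φᵀ := by
    simp only [Matrix.mul_assoc]
  rw [h1, Matrix.trace_mul_comm, ← Matrix.mul_assoc]
  have h2 : ∀ (X : Matrix (Fin M) (Fin M) ℝ),
      (X * Matrix.diagonal δ).trace = ∑ i, X i i * δ i := by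
    intro X
    simp [Matrix.trace, Matrix.mul_apply, Matrix.diagonal_apply, mul_ite, mul_zero]
  rw [h2]
  refine Finset.sum_congr rfl fun i _ => ?_
  simp only [Matrix.mul_apply, Matrix.transpose_apply, dotProduct, Matrix.mulVec, dotProduct,
    Finset.mul_sum, Finset.sum_mul]
  refine Finset.sum_congr rfl fun n _ => Finset.sum_congr rfl fun k _ => ?_
  ring

-- energy identity: uᵀ B u with B = ΦDΦᵀ + σ2 I
lemma energy_eq {N M : ℕ} (Φ : Matrix (Fin N) (Fin M) ℝ) (g : Fin M → ℝ) (σ2 : ℝ)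
    (u : Fin N → ℝ) :
    u ⬝ᵥ ((Φ * Matrix.diagonal g * Φᵀ + σ2 • (1 : Matrix (Fin N) (Fin N) ℝ)) *ᵥ u)
      = (∑ i, g i * ((Φᵀ *ᵥ u) i) ^ 2) + σ2 * (u ⬝ᵥ u) := by
  rw [Matrix.add_mulVec, dotProduct_add, Matrix.smul_mulVec, Matrix.one_mulVec,
    dotProduct_smul]
  congr 1
  · rw [← Matrix.mulVec_mulVec, ← Matrix.mulVec_mulVec, Matrix.dotProduct_mulVec,
      ← Matrix.mulVec_transpose]
    simp only [dotProduct, Matrix.mulVec_diagonal]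
    refine Finset.sum_congr rfl fun i _ => ?_
    ring

lemma quad_le {N M : ℕ} (Φ : Matrix (Fin N) (Fin M) ℝ) {g : Fin M → ℝ} (hg : ∀ i, 0 < g i)
    {σ2 : ℝ} (hσ : 0 < σ2) (v : Fin N → ℝ) (x : Fin M → ℝ) :
    v ⬝ᵥ ((Φ * Matrix.diagonal g * Φᵀ + σ2 • (1 : Matrix (Fin N) (Fin N) ℝ))⁻¹ *ᵥ v)
      ≤ (1/σ2) * ((v - Φ *ᵥ x) ⬝ᵥ (v - Φ *ᵥ x)) + ∑ i, (x i)^2 / g i := by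
  set B := Φ * Matrix.diagonal g * Φᵀ + σ2 • (1 : Matrix (Fin N) (Fin N) ℝ) with hBdef
  have hB : B.PosDef := sig_posDef_s6 Φ hσ (fun i => (hg i).le)
  set u := B⁻¹ *ᵥ v with hudef
  have hBu : B *ᵥ u = v := by
    rw [hudef, Matrix.mulVec_mulVec, Matrix.mul_nonsing_inv _ (isUnit_iff_ne_zero.mpr hB.det_pos.ne'),
      Matrix.one_mulVec]
  set w := Φᵀ *ᵥ u with hwdef
  set e := v - Φ *ᵥ x with hedef
  have hvu : v ⬝ᵥ u = (∑ i, g i * (w i) ^ 2) + σ2 * (u ⬝ᵥ u) := by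
    rw [dotProduct_comm]
    conv_lhs => rw [← hBu]
    exact energy_eq Φ g σ2 u
  have hxw : (Φ *ᵥ x) ⬝ᵥ u = x ⬝ᵥ w := by
    rw [dotProduct_comm, Matrix.dotProduct_mulVec, ← Matrix.mulVec_transpose, hwdef,
      dotProduct_comm]
  have hsplit : v ⬝ᵥ u = x ⬝ᵥ w + e ⬝ᵥ u := by
    rw [hedef, sub_dotProduct, hxw]; ring
  have hexp1 : ∑ n, (e n - σ2 * u n)^2 / σ2
      = (1/σ2) * (e ⬝ᵥ e) - 2 * (e ⬝ᵥ u) + σ2 * (u ⬝ᵥ u) := by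
    have h : ∀ n, (e n - σ2 * u n)^2 / σ2
        = (1/σ2) * (e n * e n) - 2 * (e n * u n) + σ2 * (u n * u n) := by
      intro n; field_simp; ring
    rw [Finset.sum_congr rfl (fun n _ => h n)]
    simp [dotProduct, Finset.mul_sum, Finset.sum_add_distrib, Finset.sum_sub_distrib]
  have hexp2 : ∑ i, (x i - g i * w i)^2 / g i
      = (∑ i, (x i)^2 / g i) - 2 * (x ⬝ᵥ w) + ∑ i, g i * (w i)^2 := by
    have h : ∀ i, (x i - g i * w i)^2 / g i
        = (x i)^2 / g i - 2 * (x i * w i) + g i * (w i)^2 := by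
      intro i
      have := (hg i).ne'
      field_simp; ring
    rw [Finset.sum_congr rfl (fun i _ => h i)]
    simp [dotProduct, Finset.mul_sum, Finset.sum_add_distrib, Finset.sum_sub_distrib]
  have h1 : 0 ≤ ∑ n, (e n - σ2 * u n)^2 / σ2 :=
    Finset.sum_nonneg fun n _ => div_nonneg (sq_nonneg _) hσ.le
  have h2 : 0 ≤ ∑ i, (x i - g i * w i)^2 / g i :=
    Finset.sum_nonneg fun i _ => div_nonneg (sq_nonneg _) (hg i).le
  rw [hexp1] at h1
  rw [hexp2] at h2
  show v ⬝ᵥ u ≤ (1/σ2) * (e ⬝ᵥ e) + ∑ i, (x i)^2 / g i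
  linarith [hvu, hsplit]

lemma quad_eq {N M : ℕ} (Φ : Matrix (Fin N) (Fin M) ℝ) {g : Fin M → ℝ} (hg : ∀ i, 0 < g i)
    {σ2 : ℝ} (hσ : 0 < σ2) (v : Fin N → ℝ) :
    v ⬝ᵥ ((Φ * Matrix.diagonal g * Φᵀ + σ2 • (1 : Matrix (Fin N) (Fin N) ℝ))⁻¹ *ᵥ v)
      = (1/σ2) * ((v - Φ *ᵥ (fun i => g i * ((Φᵀ *ᵥ ((Φ * Matrix.diagonal g * Φᵀ + σ2 • (1 : Matrix (Fin N) (Fin N) ℝ))⁻¹ *ᵥ v)) i))) ⬝ᵥ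
          (v - Φ *ᵥ (fun i => g i * ((Φᵀ *ᵥ ((Φ * Matrix.diagonal g * Φᵀ + σ2 • (1 : Matrix (Fin N) (Fin N) ℝ))⁻¹ *ᵥ v)) i))))
        + ∑ i, (g i * ((Φᵀ *ᵥ ((Φ * Matrix.diagonal g * Φᵀ + σ2 • (1 : Matrix (Fin N) (Fin N) ℝ))⁻¹ *ᵥ v)) i))^2 / g i := by
  set B := Φ * Matrix.diagonal g * Φᵀ + σ2 • (1 : Matrix (Fin N) (Fin N) ℝ) with hBdef
  have hB : B.PosDef := sig_posDef_s6 Φ hσ (fun i => (hg i).le)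
  set u := B⁻¹ *ᵥ v with hudef
  have hBu : B *ᵥ u = v := by
    rw [hudef, Matrix.mulVec_mulVec, Matrix.mul_nonsing_inv _ (isUnit_iff_ne_zero.mpr hB.det_pos.ne'),
      Matrix.one_mulVec]
  set w := Φᵀ *ᵥ u with hwdef
  have hPhix : Φ *ᵥ (fun i => g i * w i) = v - σ2 • u := by
    have hDw : (fun i => g i * w i) = Matrix.diagonal g *ᵥ w := by
      funext i; rw [Matrix.mulVec_diagonal]
    rw [hDw, Matrix.mulVec_mulVec, hwdef, Matrix.mulVec_mulVec, ← hBu, hBdef,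
      Matrix.add_mulVec, Matrix.smul_mulVec, Matrix.one_mulVec]
    abel
  rw [hPhix]
  have he : v - (v - σ2 • u) = σ2 • u := by abel
  rw [he]
  have hdot : (σ2 • u) ⬝ᵥ (σ2 • u) = σ2 * σ2 * (u ⬝ᵥ u) := by
    rw [smul_dotProduct, dotProduct_smul]; simp [smul_eq_mul]; ring
  have hsum : ∑ i, (g i * w i)^2 / g i = ∑ i, g i * (w i)^2 := by
    refine Finset.sum_congr rfl fun i _ => ?_
    have := (hg i).ne'
    field_simp
  rw [hdot, hsum]
  have hvu : v ⬝ᵥ u = (∑ i, g i * (w i) ^ 2) + σ2 * (u ⬝ᵥ u) := by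
    rw [dotProduct_comm]
    conv_lhs => rw [← hBu]
    exact energy_eq Φ g σ2 u
  rw [show v ⬝ᵥ B⁻¹ *ᵥ v = v ⬝ᵥ u from rfl, hvu]
  field_simp
  ring

lemma scalar_descent {t1 t2 g p : ℝ} (ht1 : 0 < t1) (ht2 : 0 < t2) (hgp : 0 < g)
    (hp0 : 0 < p) (hp1 : p < 1) :
    t2 * ((t1/t2)^p * g - g) + g^2 * t1 * (1/((t1/t2)^p * g) - 1/g)
      = -(g * t2 * (((t1/t2)^p - 1) * ((t1/t2)^(1-p) - 1))) := by
  set r := t1/t2 with hrdef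
  have hr : 0 < r := div_pos ht1 ht2
  have hrp : 0 < r ^ p := Real.rpow_pos_of_pos hr p
  have ht1r : t1 = r * t2 := by rw [hrdef, div_mul_cancel₀ _ ht2.ne']
  have h1p : r ^ (1-p) = r / r ^ p := by
    rw [Real.rpow_sub hr, Real.rpow_one]
  rw [h1p, ht1r]
  field_simp
  ring

lemma scalar_sign {r p : ℝ} (hr : 0 < r) (hrne : r ≠ 1) (hp0 : 0 < p) (hp1 : p < 1) :
    0 < (r ^ p - 1) * (r ^ (1-p) - 1) := by
  rcases lt_or_gt_of_ne hrne with h | h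
  · have ha : r ^ p < 1 := Real.rpow_lt_one hr.le h hp0
    have hb : r ^ (1-p) < 1 := Real.rpow_lt_one hr.le h (by linarith)
    exact mul_pos_of_neg_of_neg (by linarith) (by linarith)
  · have ha : 1 < r ^ p := Real.one_lt_rpow_iff_of_pos hr |>.mpr (Or.inl ⟨h, hp0⟩)
    have hb : 1 < r ^ (1-p) := Real.one_lt_rpow_iff_of_pos hr |>.mpr (Or.inl ⟨h, by linarith⟩)
    exact mul_pos (by linarith) (by linarith)

lemma scalar_sign' {r p : ℝ} (hr : 0 < r) (hp0 : 0 < p) (hp1 : p < 1) :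
    0 ≤ (r ^ p - 1) * (r ^ (1-p) - 1) := by
  rcases eq_or_ne r 1 with h | h
  · simp [h]
  · exact (scalar_sign hr h hp0 hp1).le


/-- strict descent for 0 < p < 1 at non-stationary points:
if T₁(γ) ≠ T₂(γ) at some index, then f(γ′) < f(γ) for the p-SBL update, 0 < p < 1. -/
theorem stmt6 {N M L : ℕ} (hL : 1 ≤ L) (Φ : Matrix (Fin N) (Fin M) ℝ) (σ2 : ℝ)
    (hσ : 0 < σ2) (y : Fin L → Fin N → ℝ) (γ : Fin M → ℝ) (hγ : ∀ i, 0 < γ i)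
    (hT1 : ∀ i, 0 < T1 Φ σ2 y γ i) (hT2 : ∀ i, 0 < T2 Φ σ2 γ i)
    (hne : ∃ i, T1 Φ σ2 y γ i ≠ T2 Φ σ2 γ i)
    (p : ℝ) (hp0 : 0 < p) (hp1 : p < 1)
    (γ' : Fin M → ℝ) (hγ' : ∀ i, γ' i = (T1 Φ σ2 y γ i / T2 Φ σ2 γ i) ^ p * γ i) :
    fSBL Φ σ2 y γ' < fSBL Φ σ2 y γ := by
  obtain ⟨i0, hi0⟩ := hne
  have hγ'pos : ∀ i, 0 < γ' i := fun i => by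
    rw [hγ' i]
    exact mul_pos (Real.rpow_pos_of_pos (div_pos (hT1 i) (hT2 i)) p) (hγ i)
  have hA : (Sig Φ σ2 γ).PosDef := sig_posDef_s6 Φ hσ (fun i => (hγ i).le)
  have hB : (Sig Φ σ2 γ').PosDef := sig_posDef_s6 Φ hσ (fun i => (hγ'pos i).le)
  have hAdetU : IsUnit (Sig Φ σ2 γ).det := isUnit_iff_ne_zero.mpr hA.det_pos.ne'
  -- log det part
  have hBA : Sig Φ σ2 γ' = Sig Φ σ2 γ + Φ * Matrix.diagonal (fun i => γ' i - γ i) * Φᵀ := by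
    unfold Sig
    have hdg : Matrix.diagonal γ' = Matrix.diagonal γ
        + Matrix.diagonal (fun i => γ' i - γ i) := by
      rw [Matrix.diagonal_add]
      congr 1
      funext i
      ring
    rw [hdg, Matrix.mul_add, Matrix.add_mul]
    abel
  have htrace : ((Sig Φ σ2 γ)⁻¹ * Sig Φ σ2 γ').trace
      = (N : ℝ) + ∑ i, (γ' i - γ i) * T2 Φ σ2 γ i := by
    rw [hBA, Matrix.mul_add, Matrix.trace_add, Matrix.nonsing_inv_mul _ hAdetU,
      Matrix.trace_one, trace_mul_phiDphiT]
    simp [T2]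
  have hlog : Real.log (Sig Φ σ2 γ').det
      ≤ Real.log (Sig Φ σ2 γ).det + ∑ i, (γ' i - γ i) * T2 Φ σ2 γ i := by
    have h := logdet_le hA hB
    rw [htrace] at h
    linarith
  -- data part
  have hwi : ∀ (u : Fin N → ℝ) (i : Fin M), (Φᵀ *ᵥ u) i = (fun n => Φ n i) ⬝ᵥ u := by
    intro u i
    simp [Matrix.mulVec, dotProduct, Matrix.transpose_apply]
  have hkey : ∀ l, y l ⬝ᵥ (Sig Φ σ2 γ')⁻¹ *ᵥ y l ≤ y l ⬝ᵥ (Sig Φ σ2 γ)⁻¹ *ᵥ y l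
      + ∑ i, (γ i * ((Φᵀ *ᵥ ((Sig Φ σ2 γ)⁻¹ *ᵥ y l)) i))^2 * (1/γ' i - 1/γ i) := by
    intro l
    have hEq := quad_eq Φ hγ hσ (y l)
    have hLe := quad_le Φ hγ'pos hσ (y l)
      (fun i => γ i * ((Φᵀ *ᵥ ((Φ * Matrix.diagonal γ * Φᵀ
        + σ2 • (1 : Matrix (Fin N) (Fin N) ℝ))⁻¹ *ᵥ y l)) i))
    have hdiff : ∑ i, (γ i * ((Φᵀ *ᵥ ((Φ * Matrix.diagonal γ * Φᵀ
          + σ2 • (1 : Matrix (Fin N) (Fin N) ℝ))⁻¹ *ᵥ y l)) i))^2 / γ' i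
        - ∑ i, (γ i * ((Φᵀ *ᵥ ((Φ * Matrix.diagonal γ * Φᵀ
          + σ2 • (1 : Matrix (Fin N) (Fin N) ℝ))⁻¹ *ᵥ y l)) i))^2 / γ i
        = ∑ i, (γ i * ((Φᵀ *ᵥ ((Φ * Matrix.diagonal γ * Φᵀ
          + σ2 • (1 : Matrix (Fin N) (Fin N) ℝ))⁻¹ *ᵥ y l)) i))^2 * (1/γ' i - 1/γ i) := by
      rw [← Finset.sum_sub_distrib]
      refine Finset.sum_congr rfl fun i _ => ?_
      have h1 := (hγ i).ne'
      have h2 := (hγ'pos i).ne'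
      field_simp
    show y l ⬝ᵥ (Sig Φ σ2 γ')⁻¹ *ᵥ y l ≤ _
    unfold Sig at *
    linarith [hEq, hLe, hdiff]
  have hL0 : (0:ℝ) < (L:ℝ) := by exact_mod_cast hL
  have hT1eq : ∀ i, (1/(L:ℝ)) * ∑ l, ((Φᵀ *ᵥ ((Sig Φ σ2 γ)⁻¹ *ᵥ y l)) i)^2
      = T1 Φ σ2 y γ i := by
    intro i
    unfold T1
    congr 1
  have hdata : (1/(L:ℝ)) * ∑ l, y l ⬝ᵥ (Sig Φ σ2 γ')⁻¹ *ᵥ y l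
      ≤ (1/(L:ℝ)) * ∑ l, y l ⬝ᵥ (Sig Φ σ2 γ)⁻¹ *ᵥ y l
        + ∑ i, γ i^2 * T1 Φ σ2 y γ i * (1/γ' i - 1/γ i) := by
    have h1 : ∑ l, y l ⬝ᵥ (Sig Φ σ2 γ')⁻¹ *ᵥ y l
        ≤ ∑ l, (y l ⬝ᵥ (Sig Φ σ2 γ)⁻¹ *ᵥ y l
          + ∑ i, (γ i * ((Φᵀ *ᵥ ((Sig Φ σ2 γ)⁻¹ *ᵥ y l)) i))^2 * (1/γ' i - 1/γ i)) :=
      Finset.sum_le_sum fun l _ => hkey l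
    have h2 : (1/(L:ℝ)) * ∑ l, ∑ i,
          (γ i * ((Φᵀ *ᵥ ((Sig Φ σ2 γ)⁻¹ *ᵥ y l)) i))^2 * (1/γ' i - 1/γ i)
        = ∑ i, γ i^2 * T1 Φ σ2 y γ i * (1/γ' i - 1/γ i) := by
      rw [Finset.sum_comm, Finset.mul_sum]
      refine Finset.sum_congr rfl fun i _ => ?_
      rw [← hT1eq i, Finset.mul_sum, Finset.mul_sum, Finset.mul_sum, Finset.sum_mul]
      refine Finset.sum_congr rfl fun l _ => ?_
      ring
    have h3 := mul_le_mul_of_nonneg_left h1 (by positivity : (0:ℝ) ≤ 1/(L:ℝ))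
    rw [Finset.sum_add_distrib, mul_add, h2] at h3
    exact h3
  -- scalar part
  have hterm : ∀ i, (γ' i - γ i) * T2 Φ σ2 γ i
        + γ i^2 * T1 Φ σ2 y γ i * (1/γ' i - 1/γ i)
      = -(γ i * T2 Φ σ2 γ i * (((T1 Φ σ2 y γ i / T2 Φ σ2 γ i) ^ p - 1)
          * ((T1 Φ σ2 y γ i / T2 Φ σ2 γ i) ^ (1-p) - 1))) := by
    intro i
    rw [← scalar_descent (hT1 i) (hT2 i) (hγ i) hp0 hp1, hγ' i]
    ring
  have hle : ∀ i ∈ Finset.univ, (γ' i - γ i) * T2 Φ σ2 γ i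
      + γ i^2 * T1 Φ σ2 y γ i * (1/γ' i - 1/γ i) ≤ (0:ℝ) := by
    intro i _
    rw [hterm i]
    have hs := scalar_sign' (div_pos (hT1 i) (hT2 i)) hp0 hp1
    have : 0 ≤ γ i * T2 Φ σ2 γ i * (((T1 Φ σ2 y γ i / T2 Φ σ2 γ i) ^ p - 1)
        * ((T1 Φ σ2 y γ i / T2 Φ σ2 γ i) ^ (1-p) - 1)) := by
      apply mul_nonneg (mul_nonneg (hγ i).le (hT2 i).le) hs
    linarith
  have hlt : (γ' i0 - γ i0) * T2 Φ σ2 γ i0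
      + γ i0^2 * T1 Φ σ2 y γ i0 * (1/γ' i0 - 1/γ i0) < (0:ℝ) := by
    rw [hterm i0]
    have hrne : T1 Φ σ2 y γ i0 / T2 Φ σ2 γ i0 ≠ 1 := by
      intro h
      exact hi0 ((div_eq_one_iff_eq (hT2 i0).ne').mp h)
    have hs := scalar_sign (div_pos (hT1 i0) (hT2 i0)) hrne hp0 hp1
    have : 0 < γ i0 * T2 Φ σ2 γ i0 * (((T1 Φ σ2 y γ i0 / T2 Φ σ2 γ i0) ^ p - 1)
        * ((T1 Φ σ2 y γ i0 / T2 Φ σ2 γ i0) ^ (1-p) - 1)) := by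
      apply mul_pos (mul_pos (hγ i0) (hT2 i0)) hs
    linarith
  have hsumneg : ∑ i, ((γ' i - γ i) * T2 Φ σ2 γ i
      + γ i^2 * T1 Φ σ2 y γ i * (1/γ' i - 1/γ i)) < 0 := by
    have := Finset.sum_lt_sum hle ⟨i0, Finset.mem_univ i0, hlt⟩
    simpa using this
  have hsplit : ∑ i, ((γ' i - γ i) * T2 Φ σ2 γ i
        + γ i^2 * T1 Φ σ2 y γ i * (1/γ' i - 1/γ i))
      = (∑ i, (γ' i - γ i) * T2 Φ σ2 γ i)
        + ∑ i, γ i^2 * T1 Φ σ2 y γ i * (1/γ' i - 1/γ i) :=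
    Finset.sum_add_distrib
  unfold fSBL
  linarith [hlog, hdata, hsumneg, hsplit]
end
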